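/- arXiv:2212.07111 — 4 statements merged into one kernel-verified Lean document; each statement's English description precedes it below -/
import Mathlib

section
/- Let G be a group, φ an automorphism of G of finite order dividing m, and let Ĝ = G ⋊_φ ⟨t⟩ where t has order m and t⁻¹gt = φ(g). For elements tᵃu and tᵇv of Ĝ with u, v ∈ G and 0 ≤ a, b ≤ m−1, the elements tᵃu and tᵇv are conjugate in Ĝ if and only if a = b and there exists an integer k with 0 ≤ k ≤ m−1 such that v is φᵃ-twisted conjugate to φᵏ(u) in G. -/
/-!
Conjugating `t ^ a * ι u` by `t ^ k * ι y` gives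
`t ^ a * ι (((φ ^ a) y)⁻¹ * (φ ^ k) u * y)`:
the power `t ^ k` twists `u` into `(φ ^ k) u`, and moving `ι y⁻¹` past `t ^ a` twists `y` by
`φ ^ a`. Since every element of `Ĝ` has the normal form `t ^ k * ι y` with `k < m`, and normal
forms are unique, conjugacy in `Ĝ` is exactly equality of exponents together with
`φ ^ a`-twisted conjugacy of `v` and some `(φ ^ k) u`.
-/

section CyclicExtension

variable {G H : Type*} [Group G] [Group H] {φ : MulAut G} {ι : G →* H} {t : H}

theorem map_mul_pow_eq_pow_mul_map (hconj : ∀ g : G, t⁻¹ * ι g * t = ι (φ g))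
    (n : ℕ) (g : G) :
    ι g * t ^ n = t ^ n * ι ((φ ^ n) g) := by
  induction n generalizing g with
  | zero => simp
  | succ n ih =>
    rw [pow_succ, ← mul_assoc, ih, pow_succ' φ, MulAut.mul_apply, ← hconj]
    group

theorem inv_mul_mul_eq_pow_mul_map (hconj : ∀ g : G, t⁻¹ * ι g * t = ι (φ g))
    (a k : ℕ) (u y : G) :
    (t ^ k * ι y)⁻¹ * (t ^ a * ι u) * (t ^ k * ι y) =
      t ^ a * ι (((φ ^ a) y)⁻¹ * (φ ^ k) u * y) := by
  have hu := map_mul_pow_eq_pow_mul_map hconj k u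
  have hy := map_mul_pow_eq_pow_mul_map hconj a y⁻¹
  calc (t ^ k * ι y)⁻¹ * (t ^ a * ι u) * (t ^ k * ι y)
      = ι y⁻¹ * (t ^ k)⁻¹ * t ^ a * (ι u * t ^ k) * ι y := by
        simp only [mul_inv_rev, map_inv]; group
    _ = ι y⁻¹ * t ^ a * ι ((φ ^ k) u) * ι y := by rw [hu]; group
    _ = t ^ a * ι (((φ ^ a) y)⁻¹ * (φ ^ k) u * y) := by
        rw [hy]; simp only [map_mul, map_inv]; group

end CyclicExtension

theorem conj_in_extension_iff_twisted_conj_general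
    {G Ghat : Type*} [Group G] [Group Ghat]
    (m : ℕ) (φ : MulAut G)
    (ι : G →* Ghat) (t : Ghat)
    (hconj : ∀ g : G, t⁻¹ * ι g * t = ι (φ g))
    (hnf : ∀ a b : ℕ, a < m → b < m → ∀ u v : G,
      t ^ a * ι u = t ^ b * ι v → a = b ∧ u = v)
    (hsurj : ∀ x : Ghat, ∃ l : ℕ, l < m ∧ ∃ w : G, x = t ^ l * ι w)
    (u v : G) (a b : ℕ) (ha : a < m) (hb : b < m) :
    IsConj (t ^ a * ι u) (t ^ b * ι v) ↔
      a = b ∧ ∃ k : ℕ, k < m ∧ ∃ x : G,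
        v = ((φ ^ a) x)⁻¹ * (φ ^ k) u * x := by
  constructor
  · intro hc
    obtain ⟨c, hc⟩ := isConj_iff.mp hc
    obtain ⟨k, hk, y, hcy⟩ := hsurj c⁻¹
    rw [← inv_inv c, hcy, inv_inv, inv_mul_mul_eq_pow_mul_map hconj] at hc
    obtain ⟨rfl, hv⟩ := hnf a b ha hb _ _ hc
    exact ⟨rfl, k, hk, y, hv.symm⟩
  · rintro ⟨rfl, k, -, x, rfl⟩
    exact isConj_iff.mpr
      ⟨(t ^ k * ι x)⁻¹, by rw [inv_inv, inv_mul_mul_eq_pow_mul_map hconj]⟩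

/-- Conjugacy in a finite cyclic extension `Ĝ = G ⋊_φ ⟨t⟩` (with `t^m = 1`,
`t⁻¹ g t = φ(g)`, and unique normal forms `t^l · v`) corresponds to twisted
conjugacy in `G`. -/
theorem conj_in_extension_iff_twisted_conj
    {G Ghat : Type*} [Group G] [Group Ghat]
    (m : ℕ) (hm : 0 < m) (φ : MulAut G) (hφ : φ ^ m = 1)
    (ι : G →* Ghat) (t : Ghat)
    (ht : t ^ m = 1)
    (hconj : ∀ g : G, t⁻¹ * ι g * t = ι (φ g))
    (hnf : ∀ a b : ℕ, a < m → b < m → ∀ u v : G,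
      t ^ a * ι u = t ^ b * ι v → a = b ∧ u = v)
    (hsurj : ∀ x : Ghat, ∃ l : ℕ, l < m ∧ ∃ w : G, x = t ^ l * ι w)
    (u v : G) (a b : ℕ) (ha : a < m) (hb : b < m) :
    IsConj (t ^ a * ι u) (t ^ b * ι v) ↔
      a = b ∧ ∃ k : ℕ, k < m ∧ ∃ x : G,
        v = ((φ ^ a) x)⁻¹ * (φ ^ k) u * x :=
  conj_in_extension_iff_twisted_conj_general m φ ι t hconj hnf hsurj u v a b ha hb
end

section
/- Let X be a finite alphabet and ψ a permutation of X of finite order m, extended to words letterwise. If L ⊆ X* is a regular language, then the ψ-cyclic closure Cyc_ψ(L), consisting of all words ψᵏ(x_{i+1})…ψᵏ(x_n)ψ^{k−1}(x_1)…ψ^{k−1}(x_i) for x_1…x_n ∈ L, 1 ≤ i ≤ n, 0 ≤ k ≤ m−1, is regular. -/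
/-!
By the Myhill–Nerode theorem, a language is regular as soon as each of its left quotients is
determined by finitely many data; this gives closure of regular languages under finite unions,
concatenation and letter-to-letter images. If `M` is a DFA for `L`, cutting a word `uv ∈ L` at
the state `q = M.eval u` writes the `ψ`-cyclic closure as the finite union over `k < m` and
states `q` of `ψ^k (M.acceptsFrom q) * ψ^(k-1) (M.eval⁻¹ {q} \ {[]})`.
-/

namespace DFA

variable {α σ : Type*} [Fintype σ] (M : DFA α σ)

theorem isRegular_acceptsFrom (q : σ) : (M.acceptsFrom q).IsRegular :=
  Language.isRegular_iff.mpr ⟨σ, inferInstance, { M with start := q }, rfl⟩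

theorem isRegular_eval_preimage (S : Set σ) : Language.IsRegular (M.eval ⁻¹' S) :=
  Language.isRegular_iff.mpr ⟨σ, inferInstance, { M with accept := S }, rfl⟩

end DFA

namespace Language

variable {α β : Type*}

theorem IsRegular.of_leftQuotient_eq_comp {γ : Type*} {L : Language α} (g : List α → γ)
    (F : γ → Language α) (hg : (Set.range g).Finite) (h : ∀ x, L.leftQuotient x = F (g x)) :
    L.IsRegular :=
  .of_finite_range_leftQuotient <| (hg.image F).subset <| by
    rintro _ ⟨x, rfl⟩
    exact ⟨g x, ⟨x, rfl⟩, (h x).symm⟩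

theorem mem_map {f : α → β} {l : Language α} {y : List β} :
    y ∈ map f l ↔ ∃ x ∈ l, x.map f = y := Iff.rfl

theorem mem_sSup {S : Set (Language α)} {x : List α} : x ∈ sSup S ↔ ∃ l ∈ S, x ∈ l :=
  Iff.rfl

theorem leftQuotient_one (x : List α) :
    (1 : Language α).leftQuotient x = if x = [] then 1 else 0 := by
  ext y
  split_ifs with hx <;> simp [hx, mem_one, notMem_zero]

theorem leftQuotient_iSup {ι : Sort*} (l : ι → Language α) (x : List α) :
    (⨆ i, l i).leftQuotient x = ⨆ i, (l i).leftQuotient x := by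
  ext y
  simp only [mem_leftQuotient, mem_iSup]

theorem leftQuotient_mul (l m : Language α) (x : List α) :
    (l * m).leftQuotient x =
      l.leftQuotient x * m + sSup (m.leftQuotient '' {y | ∃ a ∈ l, a ++ y = x}) := by
  ext z
  simp only [mem_leftQuotient, mem_add, mem_mul, mem_sSup, Set.mem_image, Set.mem_ofPred_eq]
  constructor
  · rintro ⟨a, ha, b, hb, hab⟩
    rcases List.append_eq_append_iff.mp hab with ⟨c, rfl, rfl⟩ | ⟨c, rfl, rfl⟩
    · exact .inr ⟨_, ⟨c, ⟨a, ha, rfl⟩, rfl⟩, hb⟩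
    · exact .inl ⟨c, ha, b, hb, rfl⟩
  · rintro (⟨c, hc, b, hb, rfl⟩ | ⟨_, ⟨y, ⟨a, ha, rfl⟩, rfl⟩, hy⟩)
    · exact ⟨_, hc, b, hb, List.append_assoc _ _ _⟩
    · exact ⟨a, ha, _, hy, (List.append_assoc _ _ _).symm⟩

theorem leftQuotient_map (f : α → β) (l : Language α) (y : List β) :
    (map f l).leftQuotient y = sSup (map f '' (l.leftQuotient '' {x | x.map f = y})) := by
  ext z
  simp only [mem_leftQuotient, mem_map, mem_sSup, Set.mem_image, Set.mem_ofPred_eq]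
  constructor
  · rintro ⟨w, hw, hwyz⟩
    obtain ⟨x, v, rfl, rfl, rfl⟩ := List.map_eq_append_iff.mp hwyz
    exact ⟨_, ⟨_, ⟨x, rfl, rfl⟩, rfl⟩, v, hw, rfl⟩
  · rintro ⟨_, ⟨_, ⟨x, rfl, rfl⟩, rfl⟩, v, hv, rfl⟩
    exact ⟨x ++ v, hv, List.map_append⟩

theorem isRegular_one : (1 : Language α).IsRegular :=
  .of_leftQuotient_eq_comp (fun x => decide (x = [])) (fun b => if b then 1 else 0)
    (Set.toFinite _) fun x => by simp [leftQuotient_one]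

theorem IsRegular.iSup {ι : Type*} [Finite ι] {l : ι → Language α}
    (h : ∀ i, (l i).IsRegular) : (⨆ i, l i).IsRegular :=
  .of_leftQuotient_eq_comp (fun x i => (l i).leftQuotient x) (fun q => ⨆ i, q i)
    ((Set.Finite.pi fun i => (h i).finite_range_leftQuotient).subset <| by
      rintro _ ⟨x, rfl⟩ i -
      exact ⟨x, rfl⟩)
    (leftQuotient_iSup l)

theorem IsRegular.mul {l m : Language α} (hl : l.IsRegular) (hm : m.IsRegular) :
    (l * m).IsRegular :=
  .of_leftQuotient_eq_comp
    (fun x => (l.leftQuotient x, m.leftQuotient '' {y | ∃ a ∈ l, a ++ y = x}))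
    (fun p => p.1 * m + sSup p.2)
    ((hl.finite_range_leftQuotient.prod hm.finite_range_leftQuotient.powerset).subset <| by
      rintro _ ⟨x, rfl⟩
      exact ⟨⟨x, rfl⟩, Set.image_subset_range _ _⟩)
    (leftQuotient_mul l m)

theorem IsRegular.map {l : Language α} (hl : l.IsRegular) (f : α → β) :
    (Language.map f l).IsRegular :=
  .of_leftQuotient_eq_comp (fun y => l.leftQuotient '' {x | x.map f = y})
    (fun S => sSup (Language.map f '' S))
    (hl.finite_range_leftQuotient.powerset.subset <| by
      rintro _ ⟨y, rfl⟩
      exact Set.image_subset_range _ _)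
    (leftQuotient_map f l)

def rotationsMap (f g : α → β) (L : Language α) : Language β :=
  {w | ∃ u v, u ≠ [] ∧ u ++ v ∈ L ∧ w = v.map f ++ u.map g}

theorem mem_rotationsMap {f g : α → β} {L : Language α} {w : List β} :
    w ∈ rotationsMap f g L ↔ ∃ u v, u ≠ [] ∧ u ++ v ∈ L ∧ w = v.map f ++ u.map g :=
  Iff.rfl

theorem rotationsMap_accepts_eq_iSup {σ : Type*} (M : DFA α σ) (f g : α → β) :
    rotationsMap f g M.accepts =
      ⨆ q, map f (M.acceptsFrom q) * map g (M.eval ⁻¹' {q} ⊓ 1ᶜ) := by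
  ext w
  simp only [mem_rotationsMap, mem_iSup, mem_mul, mem_map]
  constructor
  · rintro ⟨u, v, hu, huv, rfl⟩
    refine ⟨M.eval u, _, ⟨v, ?_, rfl⟩, _, ⟨u, ⟨rfl, hu⟩, rfl⟩, rfl⟩
    rwa [← leftQuotient_accepts_apply]
  · rintro ⟨q, _, ⟨v, hv, rfl⟩, _, ⟨u, ⟨hq, hu⟩, rfl⟩, rfl⟩
    refine ⟨u, v, hu, ?_, rfl⟩
    rwa [← mem_leftQuotient, leftQuotient_accepts_apply, hq]

theorem IsRegular.rotationsMap {L : Language α} (hL : L.IsRegular) (f g : α → β) :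
    (rotationsMap f g L).IsRegular := by
  obtain ⟨σ, _, M, rfl⟩ := hL
  rw [rotationsMap_accepts_eq_iSup]
  exact IsRegular.iSup fun q => ((M.isRegular_acceptsFrom q).map f).mul
    (((M.isRegular_eval_preimage {q}).inf isRegular_one.compl).map g)

end Language

theorem cyc_closure_regular_general {X : Type*}
    (ψ : Equiv.Perm X) (m : ℕ)
    (L : Language X) (hL : L.IsRegular) :
    Language.IsRegular {w : List X | ∃ (u v : List X) (k : ℕ), k < m ∧ u ≠ [] ∧
      u ++ v ∈ L ∧
      w = v.map ⇑(ψ ^ (k : ℤ)) ++ u.map ⇑(ψ ^ ((k : ℤ) - 1))} := by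
  refine (congrArg Language.IsRegular ?_).mp (Language.IsRegular.iSup fun k : Fin m =>
    hL.rotationsMap ⇑(ψ ^ (k : ℤ)) ⇑(ψ ^ ((k : ℤ) - 1)))
  ext w
  simp only [Language.mem_iSup, Language.mem_rotationsMap, Fin.exists_iff]
  exact ⟨fun ⟨k, hk, u, v, h⟩ => ⟨u, v, k, hk, h⟩,
    fun ⟨u, v, k, hk, h⟩ => ⟨k, hk, u, v, h⟩⟩

/-- The ψ-cyclic closure of a regular language is regular, for a finite-order
letter permutation ψ extended letterwise to words. -/
theorem cyc_closure_regular {X : Type*} [Fintype X]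
    (ψ : Equiv.Perm X) (m : ℕ) (hm : 0 < m) (hψ : ψ ^ m = 1)
    (L : Language X) (hL : L.IsRegular) :
    Language.IsRegular {w : List X | ∃ (u v : List X) (k : ℕ), k < m ∧ u ≠ [] ∧
      u ++ v ∈ L ∧
      w = v.map ⇑(ψ ^ (k : ℤ)) ++ u.map ⇑(ψ ^ ((k : ℤ) - 1))} :=
  cyc_closure_regular_general ψ m L hL
end

section
/- Let G be a finitely generated group with generating set X, and ψ a length-preserving automorphism of G (preserving word length over X). If w is a ψ-twisted conjugacy geodesic (a word whose length equals the minimal length in the ψ-twisted conjugacy class of the element it represents), then every ψ-cyclic permutation of w is also a ψ-twisted conjugacy geodesic. -/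
/-!
Write `ū, v̄` for the elements spelled by `u, v`. The `ψ`-cyclic permutation of `uv` with exponent
`k` spells `ψᵏ(v̄) ψᵏ⁻¹(ū) = ψᵏ⁻¹(ψ(v̄) ū)`, and `ψ(v̄) ū = ψ(v̄⁻¹)⁻¹ (ū v̄) v̄⁻¹` is `ψ`-twisted
conjugate to `ū v̄`; so is every `ψⁿ(g)` to `g`, since `ψ(g) = ψ(g⁻¹)⁻¹ g g⁻¹`. Hence the
permuted word lies in the twisted class of `uv`, and since `ψ` acts on words letter by letter
it has the same length, so it is again of minimal length in that class.
-/

section TwistedConjugacy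

variable {G : Type*} [Group G] (ψ : MulAut G)

def twistedConjClass (g : G) : Set G := {h | ∃ x : G, h = (ψ x)⁻¹ * g * x}

theorem mem_twistedConjClass_self (g : G) : g ∈ twistedConjClass ψ g := ⟨1, by simp⟩

theorem twistedConjClass_eq_of_mem {g h : G} (hh : h ∈ twistedConjClass ψ g) :
    twistedConjClass ψ h = twistedConjClass ψ g := by
  obtain ⟨x, rfl⟩ := hh
  ext z
  constructor
  · rintro ⟨y, rfl⟩
    exact ⟨x * y, by rw [map_mul]; group⟩
  · rintro ⟨y, rfl⟩
    exact ⟨x⁻¹ * y, by rw [map_mul, map_inv]; group⟩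

theorem twistedConjClass_apply_mul (a b : G) :
    twistedConjClass ψ (ψ b * a) = twistedConjClass ψ (a * b) :=
  twistedConjClass_eq_of_mem ψ ⟨b⁻¹, by rw [map_inv]; group⟩

theorem twistedConjClass_apply (g : G) : twistedConjClass ψ (ψ g) = twistedConjClass ψ g := by
  simpa using twistedConjClass_apply_mul ψ 1 g

theorem twistedConjClass_zpow_apply (n : ℤ) (g : G) :
    twistedConjClass ψ ((ψ ^ n) g) = twistedConjClass ψ g := by
  induction n using Int.induction_on with
  | zero => simp
  | succ n ih => rw [add_comm, zpow_add, zpow_one, MulAut.mul_apply, twistedConjClass_apply, ih]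
  | pred n ih =>
    rw [← twistedConjClass_apply, ← MulAut.mul_apply, ← zpow_one_add,
      show 1 + (-(n : ℤ) - 1) = -n by ring, ih]

end TwistedConjugacy

section Words

variable {X G : Type*} [Group G] (π : X → G)

noncomputable def wordLength (g : G) : ℕ :=
  sInf {n | ∃ w : List X, (w.map π).prod = g ∧ w.length = n}

theorem wordLength_prod_le (w : List X) : wordLength π (w.map π).prod ≤ w.length :=
  Nat.sInf_le ⟨w, rfl, rfl⟩

noncomputable def twistedLength (ℓ : G → ℕ) (ψ : MulAut G) (g : G) : ℕ :=
  sInf (ℓ '' twistedConjClass ψ g)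

theorem twistedLength_le (ℓ : G → ℕ) (ψ : MulAut G) (g : G) : twistedLength ℓ ψ g ≤ ℓ g :=
  Nat.sInf_le ⟨g, mem_twistedConjClass_self ψ g, rfl⟩

def IsTwistedConjGeodesic (ψ : MulAut G) (w : List X) : Prop :=
  w.length = twistedLength (wordLength π) ψ (w.map π).prod

variable {π}

theorem IsTwistedConjGeodesic.of_length_eq {ψ : MulAut G} {w w' : List X}
    (hw : IsTwistedConjGeodesic π ψ w) (hlen : w'.length = w.length)
    (hclass : twistedConjClass ψ (w'.map π).prod = twistedConjClass ψ (w.map π).prod) :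
    IsTwistedConjGeodesic π ψ w' := by
  have htl : twistedLength (wordLength π) ψ (w'.map π).prod =
      twistedLength (wordLength π) ψ (w.map π).prod := by
    rw [twistedLength, twistedLength, hclass]
  have hle := (twistedLength_le (wordLength π) ψ _).trans (wordLength_prod_le π w')
  unfold IsTwistedConjGeodesic at hw ⊢
  omega

variable {ψ : MulAut G} {ψp : Equiv.Perm X}

theorem zpow_apply_of_apply_eq (hcompat : ∀ x : X, ψ (π x) = π (ψp x)) (n : ℤ) (x : X) :
    (ψ ^ n) (π x) = π ((ψp ^ n) x) := by
  induction n using Int.induction_on generalizing x with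
  | zero => simp
  | succ n ih => rw [zpow_add_one, zpow_add_one, MulAut.mul_apply, Equiv.Perm.mul_apply,
      hcompat, ih]
  | pred n ih =>
    have hinv : ψ⁻¹ (π x) = π (ψp⁻¹ x) := by
      rw [← MulAut.inv_apply_self _ ψ (π (ψp⁻¹ x)), hcompat, Equiv.Perm.coe_inv,
        Equiv.apply_symm_apply]
    rw [zpow_sub_one, zpow_sub_one, MulAut.mul_apply, Equiv.Perm.mul_apply, hinv, ih]

theorem prod_map_zpow (hcompat : ∀ x : X, ψ (π x) = π (ψp x)) (l : List X) (n : ℤ) :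
    ((l.map ⇑(ψp ^ n)).map π).prod = (ψ ^ n) (l.map π).prod := by
  simp [map_list_prod, List.map_map, Function.comp_def, zpow_apply_of_apply_eq hcompat]

theorem prod_twistedCyclicPerm (hcompat : ∀ x : X, ψ (π x) = π (ψp x)) (u v : List X)
    (k : ℤ) :
    ((v.map ⇑(ψp ^ k) ++ u.map ⇑(ψp ^ (k - 1))).map π).prod =
      (ψ ^ (k - 1)) (ψ (v.map π).prod * (u.map π).prod) := by
  rw [List.map_append, List.prod_append, prod_map_zpow hcompat, prod_map_zpow hcompat, map_mul,
    ← MulAut.mul_apply, ← zpow_add_one, sub_add_cancel]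

end Words

theorem cyclicPerm_of_twistedConjGeodesic_general {X G : Type*} [Group G]
    (π : X → G) (ψ : MulAut G) (ψp : Equiv.Perm X)
    (hcompat : ∀ x : X, ψ (π x) = π (ψp x))
    (wl : G → ℕ)
    (hwl : ∀ g : G, wl g = sInf {n | ∃ w : List X, (w.map π).prod = g ∧ w.length = n})
    (tl : G → ℕ)
    (htl : ∀ g : G, tl g = sInf (wl '' {h | ∃ x : G, h = (ψ x)⁻¹ * g * x}))
    (w u v : List X) (k : ℕ) (hsplit : w = u ++ v)
    (hw : w.length = tl ((w.map π).prod)) :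
    (v.map ⇑(ψp ^ (k : ℤ)) ++ u.map ⇑(ψp ^ ((k : ℤ) - 1))).length =
      tl (((v.map ⇑(ψp ^ (k : ℤ)) ++ u.map ⇑(ψp ^ ((k : ℤ) - 1))).map π).prod) := by
  obtain rfl : wl = wordLength π := funext hwl
  obtain rfl : tl = twistedLength (wordLength π) ψ := funext htl
  subst hsplit
  refine IsTwistedConjGeodesic.of_length_eq hw (by simp [Nat.add_comm]) ?_
  rw [prod_twistedCyclicPerm hcompat, twistedConjClass_zpow_apply, twistedConjClass_apply_mul,
    List.map_append, List.prod_append]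

/-- For a length-preserving automorphism ψ (acting letterwise via the
permutation ψp of the generating letters), any ψ-cyclic permutation of a
ψ-twisted conjugacy geodesic is again a ψ-twisted conjugacy geodesic. -/
theorem cyclicPerm_of_twistedConjGeodesic {X G : Type*} [Fintype X] [Group G]
    (π : X → G) (hgen : ∀ g : G, ∃ w : List X, (w.map π).prod = g)
    (ψ : MulAut G) (ψp : Equiv.Perm X) (m : ℕ) (hm : 0 < m) (hψp : ψp ^ m = 1)
    (hcompat : ∀ x : X, ψ (π x) = π (ψp x))
    (wl : G → ℕ)
    (hwl : ∀ g : G, wl g = sInf {n | ∃ w : List X, (w.map π).prod = g ∧ w.length = n})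
    (hlenpres : ∀ g : G, wl (ψ g) = wl g)
    (tl : G → ℕ)
    (htl : ∀ g : G, tl g = sInf (wl '' {h | ∃ x : G, h = (ψ x)⁻¹ * g * x}))
    (w u v : List X) (k : ℕ) (hk : k < m) (hsplit : w = u ++ v)
    (hw : w.length = tl ((w.map π).prod)) :
    (v.map ⇑(ψp ^ (k : ℤ)) ++ u.map ⇑(ψp ^ ((k : ℤ) - 1))).length =
      tl (((v.map ⇑(ψp ^ (k : ℤ)) ++ u.map ⇑(ψp ^ ((k : ℤ) - 1))).map π).prod) :=
  cyclicPerm_of_twistedConjGeodesic_general π ψ ψp hcompat wl hwl tl htl w u v k hsplit hw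
end

section
/- The language I = { xᵖ(xy)ᵠxʳ : p ≥ q ≥ 1, r ≥ q } over the alphabet {x, y} is not context-free. -/
/-
Pumping `z = xᵏ(xy)ᵏxᵏ` leads to a contradiction in each case. If the pumped piece `t` contains
a `y`, then after pumping `i` times the word has at least `i` letters `y` but, being in `I`, at
most `p` of them, where the leading block `xᵖ` lies inside the fixed prefix `s t`; symmetrically
for `v` and the trailing block. If neither contains a `y`, pumping down removes only `x`s, while
every word of `I` with `q` letters `y` has length `p + 2q + r ≥ 4q`. The bound `|tuv| ≤ k` of
the pumping lemma plays no role in this argument.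

The pumping lemma is proved with derivations of least length. If `m` bounds the right-hand
sides, a nonterminal deriving a word longer than `m ^ (j + 1)` has, inside a least derivation, a
nonterminal deriving a subword longer than `m ^ j` in fewer steps. Descending once more than
there are nonterminals with rules, two nonterminals of the chain coincide, giving `A ⇒* t A v`;
here `t v ≠ []`, since otherwise the inner derivation would be a shorter derivation of the same
word from `A`.
-/

namespace List

variable {α : Type*} {x y : α} {n : ℕ} {a b c : List α}

lemma IsPrefix.lt_length_of_mem_of_replicate_append (h : a <+: replicate n x ++ c) (hy : y ∈ a)
    (hyx : y ≠ x) : n < a.length := by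
  by_contra! hle
  have hpre : a <+: replicate n x :=
    prefix_of_prefix_length_le h (prefix_append _ _) (by simpa using hle)
  exact hyx (eq_of_mem_replicate (hpre.subset hy))

lemma IsSuffix.lt_length_of_mem_of_append_replicate (h : b <:+ c ++ replicate n x) (hy : y ∈ b)
    (hyx : y ≠ x) : n < b.length := by
  by_contra! hle
  have hsuf : b <:+ replicate n x :=
    suffix_of_suffix_length_le h (suffix_append _ _) (by simpa using hle)
  exact hyx (eq_of_mem_replicate (hsuf.subset hy))

lemma count_flatten_replicate [BEq α] (i : ℕ) (t : List α) :
    (replicate i t).flatten.count x = i * t.count x := by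
  simp [count_flatten]

lemma Pairwise.exists_rel_map_eq_of_card_lt {β : Type*} {R : α → α → Prop} {l : List α}
    (hl : l.Pairwise R) {f : α → β} {s : Finset β} (hs : ∀ a ∈ l, f a ∈ s)
    (hlen : s.card < l.length) : ∃ a ∈ l, ∃ b ∈ l, R a b ∧ f a = f b := by
  classical
  by_contra! h
  have hnodup : (l.map f).Nodup :=
    pairwise_map.2 (hl.imp_of_mem fun ha hb hab ↦ h _ ha _ hb hab)
  have hsub : (l.map f).toFinset ⊆ s := by simpa [Finset.subset_iff] using hs
  have := Finset.card_le_card hsub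
  rw [toFinset_card_of_nodup hnodup, length_map] at this
  omega

end List

namespace ContextFreeRule

variable {T N : Type*} {r : ContextFreeRule T N}

lemma Rewrites.append_split {u₁ u₂ w : List (Symbol T N)} (h : r.Rewrites (u₁ ++ u₂) w) :
    (∃ w₁, r.Rewrites u₁ w₁ ∧ w = w₁ ++ u₂) ∨ (∃ w₂, r.Rewrites u₂ w₂ ∧ w = u₁ ++ w₂) := by
  induction u₁ generalizing w with
  | nil => exact .inr ⟨w, h, rfl⟩
  | cons a u₁ ih =>
    cases h with
    | head => exact .inl ⟨_, .head u₁, by simp⟩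
    | cons _ h =>
      rcases ih h with ⟨w₁, h₁, rfl⟩ | ⟨w₂, h₂, rfl⟩
      · exact .inl ⟨a :: w₁, h₁.cons a, rfl⟩
      · exact .inr ⟨w₂, h₂, rfl⟩

lemma rewrites_nonterminal_iff {A : N} {w : List (Symbol T N)} :
    r.Rewrites [.nonterminal A] w ↔ r.input = A ∧ w = r.output := by
  constructor
  · rintro (_ | ⟨_, h⟩)
    · simp
    · cases h
  · rintro ⟨rfl, rfl⟩
    exact .input_output

end ContextFreeRule

namespace ContextFreeGrammar

variable {T : Type*} {g : ContextFreeGrammar T}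

lemma Produces.append_split {u₁ u₂ w : List (Symbol T g.NT)} (h : g.Produces (u₁ ++ u₂) w) :
    (∃ w₁, g.Produces u₁ w₁ ∧ w = w₁ ++ u₂) ∨ (∃ w₂, g.Produces u₂ w₂ ∧ w = u₁ ++ w₂) := by
  obtain ⟨r, hr, h⟩ := h
  rcases h.append_split with ⟨w₁, h₁, rfl⟩ | ⟨w₂, h₂, rfl⟩
  exacts [.inl ⟨w₁, ⟨r, hr, h₁⟩, rfl⟩, .inr ⟨w₂, ⟨r, hr, h₂⟩, rfl⟩]

lemma not_produces_map_terminal (w : List T) (v : List (Symbol T g.NT)) :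
    ¬ g.Produces (w.map .terminal) v := fun h ↦ by
  obtain ⟨r, -, hr⟩ := h.exists_nonterminal_input_mem
  simp at hr

inductive DerivesIn (g : ContextFreeGrammar T) :
    List (Symbol T g.NT) → List (Symbol T g.NT) → ℕ → Prop
  | refl (u) : g.DerivesIn u u 0
  | head {u v w n} : g.Produces u v → g.DerivesIn v w n → g.DerivesIn u w (n + 1)

namespace DerivesIn

variable {u v w : List (Symbol T g.NT)} {m n : ℕ}

lemma derives (h : g.DerivesIn u v n) : g.Derives u v := by
  induction h with
  | refl => rfl
  | head hp _ ih => exact hp.trans_derives ih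

lemma trans (h₁ : g.DerivesIn u v m) (h₂ : g.DerivesIn v w n) : g.DerivesIn u w (m + n) := by
  induction h₁ with
  | refl => simpa using h₂
  | head hp _ ih => simpa [Nat.add_right_comm] using head hp (ih h₂)

lemma append_left (h : g.DerivesIn v w n) (p : List (Symbol T g.NT)) :
    g.DerivesIn (p ++ v) (p ++ w) n := by
  induction h with
  | refl => exact refl _
  | head hp _ ih => exact head (hp.append_left p) ih

lemma append_right (h : g.DerivesIn v w n) (p : List (Symbol T g.NT)) :
    g.DerivesIn (v ++ p) (w ++ p) n := by
  induction h with
  | refl => exact refl _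
  | head hp _ ih => exact head (hp.append_right p) ih

lemma append {u₁ u₂ w₁ w₂ : List (Symbol T g.NT)} {n₁ n₂ : ℕ}
    (h₁ : g.DerivesIn u₁ w₁ n₁) (h₂ : g.DerivesIn u₂ w₂ n₂) :
    g.DerivesIn (u₁ ++ u₂) (w₁ ++ w₂) (n₁ + n₂) :=
  (h₁.append_right u₂).trans (h₂.append_left w₁)

lemma append_split {u₁ u₂ w : List (Symbol T g.NT)} (h : g.DerivesIn (u₁ ++ u₂) w n) :
    ∃ w₁ w₂ n₁ n₂, w = w₁ ++ w₂ ∧ n = n₁ + n₂ ∧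
      g.DerivesIn u₁ w₁ n₁ ∧ g.DerivesIn u₂ w₂ n₂ := by
  generalize hu : u₁ ++ u₂ = u at h
  induction h generalizing u₁ u₂ with
  | refl => exact ⟨u₁, u₂, 0, 0, hu.symm, rfl, refl _, refl _⟩
  | head hp _ ih =>
    subst hu
    rcases hp.append_split with ⟨v₁, hp₁, rfl⟩ | ⟨v₂, hp₂, rfl⟩
    · obtain ⟨w₁, w₂, n₁, n₂, rfl, rfl, h₁, h₂⟩ := ih rfl
      exact ⟨w₁, w₂, n₁ + 1, n₂, rfl, by omega, head hp₁ h₁, h₂⟩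
    · obtain ⟨w₁, w₂, n₁, n₂, rfl, rfl, h₁, h₂⟩ := ih rfl
      exact ⟨w₁, w₂, n₁, n₂ + 1, rfl, by omega, h₁, head hp₂ h₂⟩

lemma eq_of_map_terminal {x : List T} (h : g.DerivesIn (x.map .terminal) v n) :
    v = x.map .terminal := by
  cases h with
  | refl => rfl
  | head hp _ => exact absurd hp (not_produces_map_terminal x _)

lemma exists_rule_of_map_terminal {A : g.NT} {x : List T}
    (h : g.DerivesIn [.nonterminal A] (x.map .terminal) n) :
    ∃ r ∈ g.rules, r.input = A ∧ ∃ n', n = n' + 1 ∧ g.DerivesIn r.output (x.map .terminal) n' := by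
  generalize hv : x.map Symbol.terminal = v at h
  cases h with
  | refl => simp [List.map_eq_singleton_iff] at hv
  | head hp h =>
    obtain ⟨r, hr, hrw⟩ := hp
    obtain ⟨rfl, rfl⟩ := ContextFreeRule.rewrites_nonterminal_iff.1 hrw
    exact ⟨r, hr, rfl, _, rfl, h⟩

end DerivesIn

lemma Derives.exists_derivesIn {u v : List (Symbol T g.NT)} (h : g.Derives u v) :
    ∃ n, g.DerivesIn u v n := by
  induction h using Relation.ReflTransGen.head_induction_on with
  | refl => exact ⟨0, .refl _⟩
  | head hp _ ih => obtain ⟨n, h⟩ := ih; exact ⟨n + 1, .head hp h⟩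

lemma Derives.pump {A : g.NT} {t v : List (Symbol T g.NT)}
    (h : g.Derives [.nonterminal A] (t ++ [.nonterminal A] ++ v)) (i : ℕ) :
    g.Derives [.nonterminal A]
      ((List.replicate i t).flatten ++ [.nonterminal A] ++ (List.replicate i v).flatten) := by
  induction i with
  | zero => simpa using .refl _
  | succ i ih =>
    rw [List.replicate_succ, List.replicate_succ', List.flatten_cons, List.flatten_concat]
    simpa using h.trans ((ih.append_left t).append_right v)

lemma DerivesIn.exists_long_piece {ℓ : ℕ} : ∀ {α : List (Symbol T g.NT)} {w : List T} {n : ℕ},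
    g.DerivesIn α (w.map .terminal) n → ℓ * α.length < w.length →
    ∃ a w₁ w' w₂ n₀ n', w = w₁ ++ w' ++ w₂ ∧ ℓ < w'.length ∧ n₀ + n' = n ∧
      g.DerivesIn α (w₁.map .terminal ++ [a] ++ w₂.map .terminal) n₀ ∧
      g.DerivesIn [a] (w'.map .terminal) n'
  | [], w, n, h, hw => by
    have := (DerivesIn.eq_of_map_terminal (x := []) h).symm
    simp_all
  | a :: α, w, n, h, hw => by
    obtain ⟨v₁, v₂, n₁, n₂, hv, rfl, h₁, h₂⟩ := DerivesIn.append_split (u₁ := [a]) (u₂ := α) h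
    obtain ⟨w₁, w₂, rfl, rfl, rfl⟩ := List.map_eq_append_iff.1 hv
    by_cases hw₁ : ℓ < w₁.length
    · exact ⟨a, [], w₁, w₂, n₂, n₁, by simp, hw₁, by omega, by simpa using h₂.append_left [a], h₁⟩
    · have hw₂ : ℓ * α.length < w₂.length := by
        simp only [List.length_cons, List.length_append, Nat.mul_succ] at hw
        omega
      obtain ⟨b, y₁, y', y₂, m₀, m', rfl, hy, rfl, hctx, hb⟩ := exists_long_piece h₂ hw₂
      exact ⟨b, w₁ ++ y₁, y', y₂, n₁ + m₀, m', by simp, hy, by omega,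
        by simpa using h₁.append hctx, hb⟩

structure MinDerivation (g : ContextFreeGrammar T) where
  nt : g.NT
  word : List T
  steps : ℕ
  isLeast : IsLeast {n | g.DerivesIn [.nonterminal nt] (word.map .terminal) n} steps

namespace MinDerivation

def Encloses (d₁ d₂ : g.MinDerivation) : Prop :=
  d₂.steps < d₁.steps ∧ ∃ s x, d₁.word = s ++ d₂.word ++ x ∧
    g.Derives [.nonterminal d₁.nt] (s.map .terminal ++ [.nonterminal d₂.nt] ++ x.map .terminal)

lemma exists_of_derives {A : g.NT} {w : List T} (h : g.Derives [.nonterminal A] (w.map .terminal)) :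
    ∃ d : g.MinDerivation, d.nt = A ∧ d.word = w := by
  classical
  have hex := h.exists_derivesIn
  exact ⟨⟨A, w, Nat.find hex, Nat.find_spec hex, fun _ ↦ Nat.find_min' hex⟩, rfl, rfl⟩

lemma exists_rule (d : g.MinDerivation) : ∃ r ∈ g.rules, r.input = d.nt := by
  obtain ⟨r, hr, hA, -⟩ := d.isLeast.1.exists_rule_of_map_terminal
  exact ⟨r, hr, hA⟩

lemma Encloses.trans {d₁ d₂ d₃ : g.MinDerivation} (h₁₂ : d₁.Encloses d₂) (h₂₃ : d₂.Encloses d₃) :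
    d₁.Encloses d₃ := by
  obtain ⟨hlt₁₂, s, x, hw₁₂, hd₁₂⟩ := h₁₂
  obtain ⟨hlt₂₃, s', x', hw₂₃, hd₂₃⟩ := h₂₃
  refine ⟨hlt₂₃.trans hlt₁₂, s ++ s', x' ++ x, by simp [hw₁₂, hw₂₃], ?_⟩
  simpa using hd₁₂.trans ((hd₂₃.append_left _).append_right _)

lemma exists_encloses (d : g.MinDerivation) {m k : ℕ} (hm : ∀ r ∈ g.rules, r.output.length ≤ m)
    (hm₀ : 0 < m) (hd : m ^ (k + 1) < d.word.length) :
    ∃ d', d.Encloses d' ∧ m ^ k < d'.word.length := by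
  obtain ⟨hder, hmin⟩ := d.isLeast
  obtain ⟨r, hr, hA, n, hn, hout⟩ := hder.exists_rule_of_map_terminal
  have hlen : m ^ k * r.output.length < d.word.length :=
    (Nat.mul_le_mul_left _ (hm r hr)).trans_lt (by rwa [← pow_succ])
  obtain ⟨a, w₁, w', w₂, n₀, n', hw, hw', hn', hctx, ha⟩ := hout.exists_long_piece hlen
  cases a with
  | terminal t =>
    have hlen' := congrArg List.length (ha.eq_of_map_terminal (x := [t]))
    simp only [List.length_map, List.length_singleton] at hlen'
    have := Nat.one_le_pow k m hm₀
    omega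
  | nonterminal B =>
    have hstep : g.Produces [.nonterminal d.nt] r.output := ⟨r, hr, hA ▸ .input_output⟩
    have hctx' := DerivesIn.head hstep hctx
    refine ⟨⟨B, w', n', ha, fun k hk ↦ ?_⟩,
      ⟨show n' < d.steps by omega, w₁, w₂, hw, hctx'.derives⟩, hw'⟩
    have := hmin (by simpa [hw] using hctx'.trans ((hk.append_left _).append_right _))
    omega

lemma exists_chain {m : ℕ} (hm : ∀ r ∈ g.rules, r.output.length ≤ m) (hm₀ : 0 < m) :
    ∀ (k : ℕ) (d : g.MinDerivation), m ^ k < d.word.length →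
      ∃ l : List g.MinDerivation, l.length = k ∧ (d :: l).Pairwise Encloses
  | 0, _, _ => ⟨[], rfl, List.pairwise_singleton _ _⟩
  | k + 1, d, hd => by
    obtain ⟨d', hdd', hd'⟩ := d.exists_encloses hm hm₀ hd
    obtain ⟨l, rfl, hl⟩ := exists_chain hm hm₀ k d' hd'
    refine ⟨d' :: l, rfl, List.pairwise_cons.2 ⟨?_, hl⟩⟩
    simp only [List.mem_cons, forall_eq_or_imp]
    exact ⟨hdd', fun e he ↦ hdd'.trans ((List.pairwise_cons.1 hl).1 e he)⟩

lemma Encloses.exists_pump {d₁ d₂ : g.MinDerivation} (h : d₁.Encloses d₂) (hnt : d₁.nt = d₂.nt) :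
    ∃ t v, t ++ v ≠ [] ∧ d₁.word = t ++ d₂.word ++ v ∧
      ∀ i, g.Derives [.nonterminal d₁.nt] (((List.replicate i t).flatten ++ d₂.word ++
        (List.replicate i v).flatten).map .terminal) := by
  obtain ⟨hlt, t, v, hw, hder⟩ := h
  refine ⟨t, v, fun htv ↦ ?_, hw, fun i ↦ ?_⟩
  · obtain ⟨rfl, rfl⟩ := List.append_eq_nil_iff.1 htv
    have := d₁.isLeast.2 (by simpa [hw, hnt] using d₂.isLeast.1)
    omega
  · rw [hnt] at hder ⊢
    simpa using (hder.pump i).trans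
      ((d₂.isLeast.1.derives.append_left _).append_right _)

end MinDerivation

end ContextFreeGrammar

open ContextFreeGrammar in
theorem Language.IsContextFree.exists_pumping {T : Type*} {L : Language T}
    (hL : L.IsContextFree) :
    ∃ k, ∀ w ∈ L, k ≤ w.length → ∃ s t u v x : List T,
      w = s ++ t ++ u ++ v ++ x ∧ t ++ v ≠ [] ∧
      ∀ i, s ++ (List.replicate i t).flatten ++ u ++ (List.replicate i v).flatten ++ x ∈ L := by
  classical
  obtain ⟨g, rfl⟩ := hL
  set m := (g.rules.sup fun r ↦ r.output.length) + 1
  have hm : ∀ r ∈ g.rules, r.output.length ≤ m :=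
    fun r hr ↦ (Finset.le_sup (f := fun r ↦ r.output.length) hr).trans (Nat.le_succ _)
  set N := g.rules.image ContextFreeRule.input
  refine ⟨m ^ N.card + 1, fun w hw hlen ↦ ?_⟩
  obtain ⟨d₀, hnt, rfl⟩ := MinDerivation.exists_of_derives hw
  obtain ⟨l, hl_len, hl⟩ := d₀.exists_chain hm (by omega) N.card (by omega)
  obtain ⟨d₁, hd₁, d₂, -, h₁₂, hnt₁₂⟩ := hl.exists_rel_map_eq_of_card_lt (s := N)
    (fun d _ ↦ Finset.mem_image.2 d.exists_rule) (by simp [hl_len])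
  obtain ⟨s, x, hw₁, hctx⟩ : ∃ s x, d₀.word = s ++ d₁.word ++ x ∧ g.Derives
      [.nonterminal g.initial] (s.map .terminal ++ [.nonterminal d₁.nt] ++ x.map .terminal) := by
    rcases List.mem_cons.1 hd₁ with rfl | hd₁
    · exact ⟨[], [], by simp, by simpa [hnt] using .refl _⟩
    · exact hnt ▸ ((List.pairwise_cons.1 hl).1 _ hd₁).2
  obtain ⟨t, v, htv, hw₂, hpump⟩ := h₁₂.exists_pump hnt₁₂
  refine ⟨s, t, d₂.word, v, x, by simp [hw₁, hw₂], htv, fun i ↦ ?_⟩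
  simpa using hctx.trans (((hpump i).append_left _).append_right _)

/-- The word `xᵖ(xy)ᵠxʳ`, with `x = 0` and `y = 1`. -/
abbrev xyWord (p q r : ℕ) : List (Fin 2) :=
  List.replicate p 0 ++ (List.replicate q [0, 1]).flatten ++ List.replicate r 0

lemma count_one_xyWord (p q r : ℕ) : (xyWord p q r).count 1 = q := by
  simp [List.count_flatten, List.count_replicate]

lemma length_xyWord (p q r : ℕ) : (xyWord p q r).length = p + 2 * q + r := by
  simp only [List.length_append, List.length_replicate, List.length_flatten, List.map_replicate,
    List.sum_replicate, List.length_cons, List.length_nil, smul_eq_mul]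
  ring

lemma lt_length_of_prefix_xyWord {p q r : ℕ} {a : List (Fin 2)} (h : a <+: xyWord p q r)
    (ha : 1 ∈ a) : p < a.length :=
  List.IsPrefix.lt_length_of_mem_of_replicate_append (by simpa using h) ha (by decide)

lemma lt_length_of_suffix_xyWord {p q r : ℕ} {b : List (Fin 2)} (h : b <:+ xyWord p q r)
    (hb : 1 ∈ b) : r < b.length :=
  h.lt_length_of_mem_of_append_replicate hb (by decide)

def xyLanguage : Language (Fin 2) :=
  {w | ∃ p q r, 1 ≤ q ∧ q ≤ p ∧ q ≤ r ∧ w = xyWord p q r}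

namespace xyLanguage

variable {w a : List (Fin 2)}

lemma xyWord_mem {q : ℕ} (hq : 1 ≤ q) : xyWord q q q ∈ xyLanguage :=
  ⟨q, q, q, hq, le_rfl, le_rfl, rfl⟩

lemma four_mul_count_one_le_length (hw : w ∈ xyLanguage) : 4 * w.count 1 ≤ w.length := by
  obtain ⟨p, q, r, -, hqp, hqr, rfl⟩ := hw
  rw [count_one_xyWord, length_xyWord]
  omega

lemma count_one_lt_length_of_prefix (hw : w ∈ xyLanguage) (ha : a <+: w) (h1 : 1 ∈ a) :
    w.count 1 < a.length := by
  obtain ⟨p, q, r, -, hqp, -, rfl⟩ := hw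
  have := lt_length_of_prefix_xyWord ha h1
  rw [count_one_xyWord]
  omega

lemma count_one_lt_length_of_suffix (hw : w ∈ xyLanguage) (ha : a <:+ w) (h1 : 1 ∈ a) :
    w.count 1 < a.length := by
  obtain ⟨p, q, r, -, -, hqr, rfl⟩ := hw
  have := lt_length_of_suffix_xyWord ha h1
  rw [count_one_xyWord]
  omega

variable {s t u v x : List (Fin 2)}

lemma one_notMem_left_of_forall_pump_mem
    (h : ∀ i, s ++ (List.replicate i t).flatten ++ u ++ (List.replicate i v).flatten ++ x ∈
      xyLanguage) : 1 ∉ t := fun ht ↦ by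
  set i := (s ++ t).length
  have hlt := count_one_lt_length_of_prefix (h (i + 1)) (by simp [List.replicate_succ])
    (List.mem_append_right s ht)
  have := Nat.le_mul_of_pos_right (i + 1) (List.count_pos_iff.2 ht)
  simp only [List.count_append, List.count_flatten_replicate] at hlt
  omega

lemma one_notMem_right_of_forall_pump_mem
    (h : ∀ i, s ++ (List.replicate i t).flatten ++ u ++ (List.replicate i v).flatten ++ x ∈
      xyLanguage) : 1 ∉ v := fun hv ↦ by
  set i := (v ++ x).length
  have hlt := count_one_lt_length_of_suffix (h (i + 1))
    ⟨s ++ (List.replicate (i + 1) t).flatten ++ u ++ (List.replicate i v).flatten,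
      by simp [List.replicate_succ' (a := v)]⟩ (List.mem_append_left x hv)
  have := Nat.le_mul_of_pos_right (i + 1) (List.count_pos_iff.2 hv)
  simp only [List.count_append, List.count_flatten_replicate] at hlt
  omega

end xyLanguage

/-- The language `{ x^p (xy)^q x^r : p ≥ q ≥ 1, r ≥ q }` (with `x = 0`,
`y = 1` over a two-letter alphabet) is not context-free. -/
theorem not_contextFree_xp_xyq_xr :
    ¬ Language.IsContextFree {w : List (Fin 2) | ∃ p q r : ℕ,
      1 ≤ q ∧ q ≤ p ∧ q ≤ r ∧
      w = List.replicate p 0 ++ (List.replicate q [0, 1]).flatten ++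
        List.replicate r 0} := by
  intro hL
  obtain ⟨k, hk⟩ := Language.IsContextFree.exists_pumping (L := xyLanguage) hL
  obtain ⟨s, t, u, v, x, hz, htv, hpump⟩ :=
    hk (xyWord (k + 1) (k + 1) (k + 1)) (xyLanguage.xyWord_mem (by omega))
      (by rw [length_xyWord]; omega)
  have hz1 := count_one_xyWord (k + 1) (k + 1) (k + 1)
  have hzlen := length_xyWord (k + 1) (k + 1) (k + 1)
  rw [hz] at hz1 hzlen
  have ht := xyLanguage.one_notMem_left_of_forall_pump_mem hpump
  have hv := xyLanguage.one_notMem_right_of_forall_pump_mem hpump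
  have hle := xyLanguage.four_mul_count_one_le_length (hpump 0)
  have htv' : t.length + v.length ≠ 0 := by
    simpa [← List.length_append] using htv
  simp only [List.replicate_zero, List.flatten_nil, List.append_nil, List.count_append,
    List.length_append, List.count_eq_zero_of_not_mem ht, List.count_eq_zero_of_not_mem hv]
    at hle hz1 hzlen
  omega
end
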